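/- Each of the three points \(P_{1},P_{2},P_{3}\) (defined as in the previous context) lies on the cubic surface given by \(\sum_{i=0}^5 Z_i^3 = 0\), \(\sum_{i=0}^5 Z_i = 0\), \(\sum_{i=0}^5 \beta_i Z_i = 0\). -/
import Mathlib

lemma my_cons_val_five {α : Type*} (a b c d e f : α) : ![a,b,c,d,e,f] 5 = f := rfl

/-- Each of the three points P₁, P₂, P₃ lies on the Cremona hexahedral cubic surface
∑ Zᵢ³ = 0, ∑ Zᵢ = 0, ∑ βᵢ Zᵢ = 0. -/
theorem stmt_4 (K : Type*) [Field K] [CharZero K] (β : Fin 6 → K) :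
    let P1 : Fin 6 → K := ![-(β 2 + β 3 - β 4 - β 5), β 2 + β 3 - β 4 - β 5,
      β 0 - β 1, β 0 - β 1, -(β 0 - β 1), -(β 0 - β 1)]
    let P2 : Fin 6 → K := ![β 2 - β 3, β 2 - β 3,
      -(β 0 + β 1 - β 4 - β 5), β 0 + β 1 - β 4 - β 5, -(β 2 - β 3), -(β 2 - β 3)]
    let P3 : Fin 6 → K := ![β 4 - β 5, β 4 - β 5, -(β 4 - β 5), -(β 4 - β 5),
      -(β 0 + β 1 - β 2 - β 3), β 0 + β 1 - β 2 - β 3]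
    (∑ i : Fin 6, (P1 i)^3 = 0 ∧ ∑ i : Fin 6, P1 i = 0 ∧ ∑ i : Fin 6, β i * P1 i = 0) ∧
    (∑ i : Fin 6, (P2 i)^3 = 0 ∧ ∑ i : Fin 6, P2 i = 0 ∧ ∑ i : Fin 6, β i * P2 i = 0) ∧
    (∑ i : Fin 6, (P3 i)^3 = 0 ∧ ∑ i : Fin 6, P3 i = 0 ∧ ∑ i : Fin 6, β i * P3 i = 0) := by
  refine ⟨⟨?_, ?_, ?_⟩, ⟨?_, ?_, ?_⟩, ?_, ?_, ?_⟩ <;>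
    simp [Fin.sum_univ_six, Matrix.cons_val_succ, my_cons_val_five] <;> ring
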